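/- arXiv:1509.06237 — 4 statements merged into one kernel-verified Lean document; each statement's English description precedes it below -/
import Mathlib

section
/- Let G be a finite strongly connected directed multigraph and π a vector of positive integers indexed by vertices. Then G has a π-Eulerian tour (a closed walk using each directed edge e exactly π_{tail(e)} times) if and only if Δπ = 0, where Δ is the graph Laplacian. -/
open Finset

structure Multigraph (V E : Type) where
  tail : E → V
  head : E → V

namespace Multigraph

variable {V E : Type} [Fintype V] [Fintype E] [DecidableEq V] [DecidableEq E]

/-- Outdegree of a vertex. -/
def outdeg (G : Multigraph V E) (v : V) : ℕ :=
  (Finset.univ.filter (fun e => G.tail e = v)).card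

/-- Indegree of a vertex. -/
def indeg (G : Multigraph V E) (v : V) : ℕ :=
  (Finset.univ.filter (fun e => G.head e = v)).card

/-- Number of edges from `u` to `v`. -/
def edgeCount (G : Multigraph V E) (u v : V) : ℕ :=
  (Finset.univ.filter (fun e => G.tail e = u ∧ G.head e = v)).card

/-- Directed graph Laplacian: `Δ u v = d_v δ_{uv} − d_{vu}`. -/
def laplacian (G : Multigraph V E) : Matrix V V ℤ :=
  fun u v => (if u = v then (G.outdeg v : ℤ) else 0) - (G.edgeCount v u : ℤ)

def Adj (G : Multigraph V E) (u v : V) : Prop := ∃ e, G.tail e = u ∧ G.head e = v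

/-- Strong connectivity: every vertex reaches every other by a directed path. -/
def StronglyConnected (G : Multigraph V E) : Prop :=
  ∀ u v : V, Relation.ReflTransGen G.Adj u v

/-- A list of edges forms a walk: consecutive edges are incident. -/
def IsWalk (G : Multigraph V E) : List E → Prop
  | [] => True
  | [_] => True
  | e :: f :: rest => G.head e = G.tail f ∧ G.IsWalk (f :: rest)

/-- A nonempty walk that returns to its starting vertex. -/
def IsClosedWalk (G : Multigraph V E) (w : List E) : Prop :=
  w ≠ [] ∧ G.IsWalk w ∧ w.getLast?.map G.head = w.head?.map G.tail

/-- The walk starts at vertex `v`. -/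
def StartsAt (G : Multigraph V E) (w : List E) (v : V) : Prop :=
  w.head?.map G.tail = some v

/-- A π-Eulerian tour: closed walk using each edge `e` exactly `π (tail e)` times. -/
def IsPiEulerian (G : Multigraph V E) (π : V → ℕ) (w : List E) : Prop :=
  G.IsClosedWalk w ∧ ∀ e : E, w.count e = π (G.tail e)

/-- An Eulerian tour: closed walk using each edge exactly once. -/
def IsEulerian (G : Multigraph V E) (w : List E) : Prop :=
  G.IsClosedWalk w ∧ ∀ e : E, w.count e = 1

/-- A multi-Eulerian tour: closed walk using each edge at least once, and edges
with the same tail equally often. -/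
def IsMultiEulerian (G : Multigraph V E) (w : List E) : Prop :=
  G.IsClosedWalk w ∧ (∀ e : E, 1 ≤ w.count e) ∧
  ∀ e f : E, G.tail e = G.tail f → w.count e = w.count f

/-- A spanning tree oriented toward `w`: every vertex other than `w` has exactly one
outgoing edge, `w` has none, and every vertex reaches `w` inside the subgraph. -/
def IsTreeTo (G : Multigraph V E) (w : V) (T : Finset E) : Prop :=
  (∀ v, v ≠ w → (T.filter (fun e => G.tail e = v)).card = 1) ∧
  (∀ e ∈ T, G.tail e ≠ w) ∧
  ∀ v : V, Relation.ReflTransGen (fun a b => ∃ e ∈ T, G.tail e = a ∧ G.head e = b) v w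

/-- Number of spanning trees oriented toward `w`. -/
noncomputable def treeCount (G : Multigraph V E) (w : V) : ℕ :=
  Nat.card {T : Finset E // G.IsTreeTo w T}

end Multigraph

/-!
A closed walk enters and leaves every vertex equally often, and `Δπ = 0` says exactly that
`e ↦ π (tail e)` is balanced in this sense; this gives one direction. Conversely, take a longest
walk using each edge `e` at most `π (tail e)` times. Were its end different from its start,
balance at the end would leave an unused outgoing edge to append. So it is closed, and were
some edge leaving a visited vertex not used to capacity, rotating the walk to start there and
appending that edge would make it longer. Hence every edge leaving a visited vertex lies on the
walk, the visited set is closed under edges, and by strong connectivity every edge is saturated.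
-/

lemma Nat.exists_forall_le_of_bounded {α : Type*} {P : α → Prop} (f : α → ℕ) {B : ℕ}
    (hB : ∀ a, P a → f a ≤ B) (h : ∃ a, P a) : ∃ a, P a ∧ ∀ b, P b → f b ≤ f a := by
  have hbdd : BddAbove (f '' {a | P a}) := ⟨B, by rintro _ ⟨a, ha, rfl⟩; exact hB a ha⟩
  obtain ⟨a, ha, hfa⟩ := Nat.sSup_mem (Set.Nonempty.image f h) hbdd
  exact ⟨a, ha, fun b hb => hfa ▸ le_csSup hbdd ⟨b, hb, rfl⟩⟩

namespace Multigraph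

variable {V E : Type} {G : Multigraph V E}

lemma StronglyConnected.forall_of_closed (hsc : G.StronglyConnected) {S : V → Prop} {x : V}
    (hx : S x) (hS : ∀ a b, G.Adj a b → S a → S b) (y : V) : S y := by
  induction hsc x y with
  | refl => exact hx
  | tail _ hab ih => exact hS _ _ hab ih

def IsWalkFromTo (G : Multigraph V E) : V → V → List E → Prop
  | u, v, [] => u = v
  | u, v, e :: t => G.tail e = u ∧ G.IsWalkFromTo (G.head e) v t

@[simp]
lemma isWalkFromTo_nil {u v : V} : G.IsWalkFromTo u v [] ↔ u = v := Iff.rfl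

@[simp]
lemma isWalkFromTo_cons {u v : V} {e : E} {t : List E} :
    G.IsWalkFromTo u v (e :: t) ↔ G.tail e = u ∧ G.IsWalkFromTo (G.head e) v t := Iff.rfl

lemma isWalkFromTo_append {u v : V} {p q : List E} :
    G.IsWalkFromTo u v (p ++ q) ↔ ∃ m, G.IsWalkFromTo u m p ∧ G.IsWalkFromTo m v q := by
  induction p generalizing u with
  | nil => simp
  | cons e t ih => simp [ih, and_assoc]

lemma IsWalkFromTo.append {u m v : V} {p q : List E} (hp : G.IsWalkFromTo u m p)
    (hq : G.IsWalkFromTo m v q) : G.IsWalkFromTo u v (p ++ q) :=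
  isWalkFromTo_append.2 ⟨m, hp, hq⟩

lemma IsWalkFromTo.concat {u v : V} {w : List E} (hw : G.IsWalkFromTo u v w) {g : E}
    (hg : G.tail g = v) : G.IsWalkFromTo u (G.head g) (w ++ [g]) :=
  hw.append ⟨hg, rfl⟩

lemma isWalkFromTo_cons_iff_isWalk {u v : V} {e : E} {t : List E} :
    G.IsWalkFromTo u v (e :: t) ↔
      G.tail e = u ∧ G.IsWalk (e :: t) ∧ G.head ((e :: t).getLast (List.cons_ne_nil e t)) = v := by
  induction t generalizing e u with
  | nil => simp [IsWalk]
  | cons f r ih => simp [ih, IsWalk, eq_comm, and_assoc]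

lemma isClosedWalk_iff {w : List E} :
    G.IsClosedWalk w ↔ w ≠ [] ∧ ∃ u, G.IsWalkFromTo u u w := by
  cases w with
  | nil => simp [IsClosedWalk]
  | cons e t =>
    simp only [IsClosedWalk, List.getLast?_eq_some_getLast (List.cons_ne_nil e t), ne_eq,
      reduceCtorEq, not_false_eq_true, true_and, List.head?_cons, Option.map_some,
      Option.some.injEq]
    constructor
    · rintro ⟨hw, hlast⟩
      exact ⟨G.tail e, isWalkFromTo_cons_iff_isWalk.2 ⟨rfl, hw, hlast⟩⟩
    · rintro ⟨u, hu⟩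
      obtain ⟨rfl, hw, hlast⟩ := isWalkFromTo_cons_iff_isWalk.1 hu
      exact ⟨hw, hlast⟩

lemma IsWalkFromTo.exists_rotate {u : V} {w : List E} (hw : G.IsWalkFromTo u u w) {f : E}
    (hf : f ∈ w) : ∃ b, G.IsWalkFromTo (G.tail f) (G.tail f) (f :: b) ∧ (f :: b).Perm w := by
  obtain ⟨a, b, rfl⟩ := List.append_of_mem hf
  obtain ⟨m, ha, hfb⟩ := isWalkFromTo_append.1 hw
  obtain ⟨rfl, -⟩ := isWalkFromTo_cons.1 hfb
  exact ⟨b ++ a, by simpa using hfb.append ha, List.perm_append_comm (l₁ := f :: b)⟩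

lemma IsWalkFromTo.exists_tail_eq_head {u : V} {w : List E} (hw : G.IsWalkFromTo u u w)
    {g : E} (hg : g ∈ w) : ∃ f ∈ w, G.tail f = G.head g := by
  obtain ⟨b, hb, hperm⟩ := hw.exists_rotate hg
  cases b with
  | nil => exact ⟨g, hg, by simpa using hb.2.symm⟩
  | cons f b => exact ⟨f, hperm.subset (by simp), hb.2.1⟩

section Circulation

variable [Fintype E] [DecidableEq V]

def IsCirculation (G : Multigraph V E) (c : E → ℕ) : Prop :=
  ∀ v, ∑ e with G.tail e = v, c e = ∑ e with G.head e = v, c e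

lemma laplacian_mulVec_apply [Fintype V] (G : Multigraph V E) (π : V → ℕ) (u : V) :
    G.laplacian.mulVec (fun v => (π v : ℤ)) u =
      ∑ e with G.tail e = u, (π (G.tail e) : ℤ) - ∑ e with G.head e = u, (π (G.tail e) : ℤ) := by
  have hout : ∑ e with G.tail e = u, (π (G.tail e) : ℤ) = G.outdeg u * π u := by
    rw [Finset.sum_congr rfl fun e he => by rw [(mem_filter.1 he).2], sum_const, nsmul_eq_mul,
      outdeg]
  have hin : ∑ e with G.head e = u, (π (G.tail e) : ℤ) = ∑ v, (G.edgeCount v u : ℤ) * π v := by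
    rw [← Finset.sum_fiberwise' _ G.tail (fun v => (π v : ℤ))]
    refine Finset.sum_congr rfl fun v _ => ?_
    rw [sum_const, nsmul_eq_mul, filter_filter, edgeCount]
    simp_rw [and_comm]
  rw [hout, hin]
  simp [Matrix.mulVec, dotProduct, laplacian, sub_mul, Finset.sum_sub_distrib]

lemma laplacian_mulVec_eq_zero_iff [Fintype V] (G : Multigraph V E) (π : V → ℕ) :
    G.laplacian.mulVec (fun v => (π v : ℤ)) = 0 ↔ G.IsCirculation (fun e => π (G.tail e)) := by
  simp only [funext_iff, laplacian_mulVec_apply, Pi.zero_apply, sub_eq_zero, IsCirculation]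
  exact_mod_cast Iff.rfl

end Circulation

variable [DecidableEq E]

lemma sum_count_cons (s : Finset E) (e : E) (t : List E) :
    ∑ f ∈ s, (e :: t).count f = ∑ f ∈ s, t.count f + if e ∈ s then 1 else 0 := by
  simp [List.count_cons, Finset.sum_add_distrib]

def IsWalkWithin (G : Multigraph V E) (c : E → ℕ) (w : List E) : Prop :=
  (∃ u v, G.IsWalkFromTo u v w) ∧ ∀ e, w.count e ≤ c e

lemma isWalkWithin_concat {c : E → ℕ} {w w' : List E} (hwc : ∀ e, w.count e ≤ c e)
    (hperm : w'.Perm w) {u v : V} (hw' : G.IsWalkFromTo u v w') {g : E} (hg : G.tail g = v)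
    (hgc : w.count g < c g) : G.IsWalkWithin c (w' ++ [g]) := by
  refine ⟨⟨u, G.head g, hw'.concat hg⟩, fun e => ?_⟩
  simp only [List.count_append, hperm.count_eq, List.count_singleton, beq_iff_eq]
  split_ifs with h
  · exact h ▸ hgc
  · exact hwc e

variable [Fintype E]

lemma IsWalkWithin.length_le {c : E → ℕ} {w : List E} (hw : G.IsWalkWithin c w) :
    w.length ≤ ∑ e, c e := by
  rw [← Multiset.coe_card, ← Multiset.sum_count_eq_card (s := univ) (by simp)]
  exact Finset.sum_le_sum fun e _ => by simpa using hw.2 e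

lemma exists_longest_isWalkWithin {c : E → ℕ} {e₀ : E} (h₀ : 0 < c e₀) :
    ∃ w, w ≠ [] ∧ G.IsWalkWithin c w ∧ ∀ w', G.IsWalkWithin c w' → w'.length ≤ w.length := by
  have hsingle : G.IsWalkWithin c [e₀] := by
    refine ⟨⟨G.tail e₀, G.head e₀, by simp⟩, fun e => ?_⟩
    simp only [List.count_singleton, beq_iff_eq]
    split_ifs with h
    · exact h ▸ h₀
    · exact Nat.zero_le _
  obtain ⟨w, hw, hmax⟩ :=
    Nat.exists_forall_le_of_bounded _ (fun w => IsWalkWithin.length_le) ⟨_, hsingle⟩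
  refine ⟨w, fun hnil => ?_, hw, hmax⟩
  simpa [hnil] using hmax _ hsingle

variable [DecidableEq V]

lemma IsWalkFromTo.sum_count_add_ite {u v : V} {w : List E} (hw : G.IsWalkFromTo u v w)
    (x : V) :
    ∑ e with G.tail e = x, w.count e + (if v = x then 1 else 0) =
      ∑ e with G.head e = x, w.count e + (if u = x then 1 else 0) := by
  induction w generalizing u with
  | nil => simp [isWalkFromTo_nil.1 hw]
  | cons e t ih =>
    obtain ⟨rfl, ht⟩ := hw
    have := ih ht
    simp only [sum_count_cons, mem_filter, mem_univ, true_and] at this ⊢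
    split_ifs at this ⊢ <;> omega

lemma IsWalkFromTo.isCirculation_count {u : V} {w : List E} (hw : G.IsWalkFromTo u u w) :
    G.IsCirculation (w.count ·) :=
  fun x => Nat.add_right_cancel (hw.sum_count_add_ite x)

lemma IsCirculation.exists_count_lt {c : E → ℕ} (hc : G.IsCirculation c) {u x : V}
    {w : List E} (hw : G.IsWalkFromTo u x w) (hwc : ∀ e, w.count e ≤ c e) (hxu : x ≠ u) :
    ∃ g, G.tail g = x ∧ w.count g < c g := by
  by_contra! hsat
  have hout : ∑ e with G.tail e = x, w.count e = ∑ e with G.tail e = x, c e :=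
    Finset.sum_congr rfl fun e he => (hwc e).antisymm (hsat e (mem_filter.1 he).2)
  have hin : ∑ e with G.head e = x, w.count e ≤ ∑ e with G.head e = x, c e :=
    Finset.sum_le_sum fun e _ => hwc e
  have hflow := hw.sum_count_add_ite x
  rw [if_pos rfl, if_neg hxu.symm, hout, hc x] at hflow
  omega

theorem IsCirculation.exists_isClosedWalk_count_eq [Nonempty E] {c : E → ℕ}
    (hc : G.IsCirculation c) (hpos : ∀ e, 0 < c e) (hsc : G.StronglyConnected) :
    ∃ w, G.IsClosedWalk w ∧ ∀ e, w.count e = c e := by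
  obtain ⟨e₀⟩ := ‹Nonempty E›
  obtain ⟨w, hne, ⟨⟨u, v, hw⟩, hwc⟩, hmax⟩ := exists_longest_isWalkWithin (G := G) (hpos e₀)
  have hmaximal : ∀ {w'}, w'.Perm w → ∀ {x y}, G.IsWalkFromTo x y w' →
      ∀ g, G.tail g = y → w.count g < c g → False := fun hperm _ _ hw' g hg hgc => by
    simpa [hperm.length_eq] using hmax _ (isWalkWithin_concat hwc hperm hw' hg hgc)
  obtain rfl : u = v := by
    by_contra huv
    obtain ⟨g, hg, hgc⟩ := hc.exists_count_lt hw hwc (Ne.symm huv)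
    exact hmaximal (List.Perm.refl w) hw g hg hgc
  have hsat : ∀ f ∈ w, ∀ g, G.tail g = G.tail f → w.count g = c g := by
    intro f hf g hg
    obtain ⟨b, hb, hperm⟩ := hw.exists_rotate hf
    exact (hwc g).eq_of_not_lt (hmaximal hperm hb g hg)
  obtain ⟨f₀, hf₀⟩ := List.exists_mem_of_ne_nil w hne
  have hcover : ∀ x, ∃ f ∈ w, G.tail f = x := by
    refine hsc.forall_of_closed ⟨f₀, hf₀, rfl⟩ ?_
    rintro a b ⟨g, rfl, rfl⟩ ⟨f, hf, hfg⟩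
    have hgw : g ∈ w := List.count_pos_iff.1 (hsat f hf g hfg.symm ▸ hpos g)
    exact hw.exists_tail_eq_head hgw
  refine ⟨w, isClosedWalk_iff.2 ⟨hne, u, hw⟩, fun g => ?_⟩
  obtain ⟨f, hf, hfg⟩ := hcover (G.tail g)
  exact hsat f hf g hfg.symm

end Multigraph

theorem stmt2 {V E : Type} [Fintype V] [Fintype E] [DecidableEq V] [DecidableEq E]
    [Nonempty E] (G : Multigraph V E) (hsc : G.StronglyConnected)
    (π : V → ℕ) (hπ : ∀ v, 0 < π v) :
    (∃ w : List E, G.IsPiEulerian π w) ↔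
      G.laplacian.mulVec (fun v => (π v : ℤ)) = 0 := by
  rw [G.laplacian_mulVec_eq_zero_iff π]
  constructor
  · rintro ⟨w, hw, hcount⟩
    obtain ⟨-, u, hu⟩ := Multigraph.isClosedWalk_iff.1 hw
    simpa only [← funext hcount] using hu.isCirculation_count
  · intro hc
    exact hc.exists_isClosedWalk_count_eq (fun e => hπ _) hsc
end

section
/- (Markov chain tree theorem / Broder–Aldous) For a finite strongly connected directed multigraph G, the vector κ whose v-th entry κ_v counts the spanning trees of G oriented toward v satisfies Δκ = 0, where Δ is the graph Laplacian. -/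
open Finset

/-!
Call `σ : V → E` an `r`-rooted choice if it picks an outgoing edge at every vertex and following
the picked edges from any vertex eventually leads to `r`. Forgetting `σ r` turns an `r`-rooted
choice into a spanning tree oriented toward `r`, and `σ r` may be any edge out of `r`, so there are
`d_r κ_r` of them. On the other hand, if `σ` is `u`-rooted then `u` lies on the unique cycle of
`head ∘ σ`; its predecessor `v` on that cycle is again a root, and `σ v` is an edge `v → u`.
Grouping the `u`-rooted choices by `v` counts them as `∑ v, d_{vu} κ_v`, which is `(Δκ)_u = 0`.
-/

namespace Function

variable {α : Type*} {f : α → α} {x y : α}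

theorem apply_iterate_minimalPeriod_pred (hx : x ∈ periodicPts f) :
    f (f^[minimalPeriod f x - 1] x) = x := by
  have hpos := minimalPeriod_pos_of_mem_periodicPts hx
  rw [← iterate_succ_apply' f]
  convert iterate_minimalPeriod (f := f) (x := x) using 2
  omega

theorem iterate_minimalPeriod_pred_eq (hx : x ∈ periodicPts f) (hy : ∃ n, f^[n] x = y)
    (hfy : f y = x) : f^[minimalPeriod f x - 1] x = y := by
  obtain ⟨n, rfl⟩ := hy
  have hpos := minimalPeriod_pos_of_mem_periodicPts hx
  have hper : IsPeriodicPt f (n % minimalPeriod f x + 1) x := by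
    rw [IsPeriodicPt, IsFixedPt, iterate_succ_apply', iterate_mod_minimalPeriod_eq, hfy]
  have hle := Nat.le_of_dvd (Nat.succ_pos _) hper.minimalPeriod_dvd
  have hlt := Nat.mod_lt n hpos
  rw [show minimalPeriod f x - 1 = n % minimalPeriod f x by omega, iterate_mod_minimalPeriod_eq]

end Function

namespace Multigraph

variable {V E : Type}

def IsRootedChoice (G : Multigraph V E) (σ : V → E) (r : V) : Prop :=
  (∀ x, G.tail (σ x) = x) ∧ ∀ w, ∃ n, (G.head ∘ σ)^[n] w = r

variable {G : Multigraph V E}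

theorem exists_iterate_eq_of_reflTransGen {T : Finset E} {σ : V → E}
    (hσ : ∀ e ∈ T, σ (G.tail e) = e) {w r : V}
    (h : Relation.ReflTransGen (fun a b => ∃ e ∈ T, G.tail e = a ∧ G.head e = b) w r) :
    ∃ n, (G.head ∘ σ)^[n] w = r := by
  induction h using Relation.ReflTransGen.head_induction_on with
  | refl => exact ⟨0, rfl⟩
  | head hab _ ih =>
    obtain ⟨e, he, rfl, rfl⟩ := hab
    obtain ⟨n, hn⟩ := ih
    exact ⟨n + 1, by rwa [Function.iterate_succ_apply, Function.comp_apply, hσ e he]⟩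

theorem IsRootedChoice.mem_periodicPts {σ : V → E} {r : V} (h : G.IsRootedChoice σ r) :
    r ∈ Function.periodicPts (G.head ∘ σ) := by
  obtain ⟨n, hn⟩ := h.2 ((G.head ∘ σ) r)
  exact Function.mk_mem_periodicPts n.succ_pos (by rwa [Function.IsPeriodicPt,
    Function.IsFixedPt, Function.iterate_succ_apply])

theorem IsRootedChoice.of_iterate_eq {σ : V → E} {r s : V} (h : G.IsRootedChoice σ r)
    (hs : ∃ m, (G.head ∘ σ)^[m] r = s) : G.IsRootedChoice σ s := by
  obtain ⟨m, hm⟩ := hs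
  refine ⟨h.1, fun w => ?_⟩
  obtain ⟨n, hn⟩ := h.2 w
  exact ⟨m + n, by rw [Function.iterate_add_apply, hn, hm]⟩

/-- `(G.head ∘ σ)^[minimalPeriod (G.head ∘ σ) u - 1] u` is the predecessor of `u` on the cycle
of `G.head ∘ σ`. -/
theorem isRootedChoice_and_iterate_eq_iff {σ : V → E} {u v : V} :
    (G.IsRootedChoice σ u ∧
        (G.head ∘ σ)^[Function.minimalPeriod (G.head ∘ σ) u - 1] u = v) ↔
      G.IsRootedChoice σ v ∧ G.head (σ v) = u := by
  constructor
  · rintro ⟨hu, rfl⟩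
    exact ⟨hu.of_iterate_eq ⟨_, rfl⟩, Function.apply_iterate_minimalPeriod_pred hu.mem_periodicPts⟩
  · rintro ⟨hv, hvu⟩
    have hu : G.IsRootedChoice σ u := hv.of_iterate_eq ⟨1, hvu⟩
    exact ⟨hu, Function.iterate_minimalPeriod_pred_eq hu.mem_periodicPts (hv.2 u) hvu⟩

section Trees

variable [Fintype V] [DecidableEq V] [DecidableEq E]

theorem mem_image_erase_iff {σ : V → E} (hσ : ∀ x, G.tail (σ x) = x) {r : V} {e : E} :
    e ∈ (univ.erase r).image σ ↔ G.tail e ≠ r ∧ σ (G.tail e) = e := by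
  simp only [mem_image, mem_erase, mem_univ, and_true]
  constructor
  · rintro ⟨x, hx, rfl⟩
    rw [hσ x]
    exact ⟨hx, rfl⟩
  · rintro ⟨hr, he⟩
    exact ⟨G.tail e, hr, he⟩

theorem reflTransGen_of_iterate_eq {σ : V → E} (hσ : ∀ x, G.tail (σ x) = x) {r : V} (n : ℕ) :
    ∀ w, (G.head ∘ σ)^[n] w = r → Relation.ReflTransGen
      (fun a b => ∃ e ∈ (univ.erase r).image σ, G.tail e = a ∧ G.head e = b) w r := by
  induction n with
  | zero => rintro w rfl; exact .refl
  | succ n ih =>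
    intro w hw
    by_cases hwr : w = r
    · exact hwr ▸ .refl
    · exact .head ⟨σ w, (mem_image_erase_iff hσ).2 ⟨by rwa [hσ w], by rw [hσ w]⟩, hσ w, rfl⟩
        (ih _ hw)

theorem IsRootedChoice.isTreeTo {σ : V → E} {r : V} (h : G.IsRootedChoice σ r) :
    G.IsTreeTo r ((univ.erase r).image σ) := by
  obtain ⟨hσ, hreach⟩ := h
  refine ⟨fun v hv => card_eq_one.2 ⟨σ v, ?_⟩, fun e he => ((mem_image_erase_iff hσ).1 he).1,
    fun v => ?_⟩
  · ext e
    simp only [mem_filter, mem_image_erase_iff hσ, mem_singleton]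
    constructor
    · rintro ⟨⟨-, he⟩, rfl⟩
      exact he.symm
    · rintro rfl
      exact ⟨⟨by rwa [hσ], by rw [hσ]⟩, hσ v⟩
  · obtain ⟨n, hn⟩ := hreach v
    exact reflTransGen_of_iterate_eq hσ n v hn

theorem eq_of_apply_eq_of_image_erase_eq {σ σ' : V → E} (hσ : ∀ x, G.tail (σ x) = x)
    (hσ' : ∀ x, G.tail (σ' x) = x) {r : V} (hr : σ r = σ' r)
    (himage : (univ.erase r).image σ = (univ.erase r).image σ') : σ = σ' := by
  funext x
  by_cases hx : x = r
  · rw [hx, hr]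
  · have hmem : σ x ∈ (univ.erase r).image σ' := by
      rw [← himage]
      exact mem_image_of_mem σ (mem_erase.2 ⟨hx, mem_univ x⟩)
    have := ((mem_image_erase_iff hσ').1 hmem).2
    rw [hσ x] at this
    exact this.symm

theorem IsTreeTo.exists_isRootedChoice {r : V} {T : Finset E} (hT : G.IsTreeTo r T) {f : E}
    (hf : G.tail f = r) :
    ∃ σ, G.IsRootedChoice σ r ∧ σ r = f ∧ (univ.erase r).image σ = T := by
  obtain ⟨hcard, htail, hreach⟩ := hT
  choose out hout using fun v (hv : v ≠ r) => card_eq_one.1 (hcard v hv)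
  have hout_mem : ∀ v hv, out v hv ∈ T ∧ G.tail (out v hv) = v := fun v hv =>
    mem_filter.1 (hout v hv ▸ mem_singleton_self _)
  let σ : V → E := fun v => if hv : v = r then f else out v hv
  have hσr : σ r = f := dif_pos rfl
  have hσout : ∀ v (hv : v ≠ r), σ v = out v hv := fun v hv => dif_neg hv
  have hσ : ∀ x, G.tail (σ x) = x := by
    intro x
    by_cases hx : x = r
    · rw [hx, hσr, hf]
    · rw [hσout x hx, (hout_mem x hx).2]
  have hσT : ∀ e ∈ T, σ (G.tail e) = e := by
    intro e he
    have hmem : e ∈ T.filter (fun e' => G.tail e' = G.tail e) := mem_filter.2 ⟨he, rfl⟩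
    rw [hout _ (htail e he), mem_singleton] at hmem
    rw [hσout _ (htail e he)]
    exact hmem.symm
  refine ⟨σ, ⟨hσ, fun w => exists_iterate_eq_of_reflTransGen hσT (hreach w)⟩, hσr, ?_⟩
  ext e
  rw [mem_image_erase_iff hσ]
  constructor
  · rintro ⟨hr, he⟩
    rw [← he, hσout _ hr]
    exact (hout_mem _ hr).1
  · exact fun he => ⟨htail e he, hσT e he⟩

end Trees

section Counting

variable (G : Multigraph V E)

theorem card_isRootedChoice_and [Fintype V] [DecidableEq V] (r : V) (p : E → Prop) :
    Nat.card {σ // G.IsRootedChoice σ r ∧ p (σ r)}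
      = Nat.card {e // G.tail e = r ∧ p e} * G.treeCount r := by
  classical
  rw [treeCount, ← Nat.card_prod]
  refine Nat.card_eq_of_bijective
    (fun σ => (⟨σ.1 r, σ.2.1.1 r, σ.2.2⟩, ⟨_, σ.2.1.isTreeTo⟩)) ⟨?_, ?_⟩
  · rintro ⟨σ, hσ, _⟩ ⟨σ', hσ', _⟩ h
    simp only [Prod.mk.injEq, Subtype.mk.injEq] at h
    exact Subtype.ext (eq_of_apply_eq_of_image_erase_eq hσ.1 hσ'.1 h.1 h.2)
  · rintro ⟨⟨f, hf, hp⟩, ⟨T, hT⟩⟩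
    obtain ⟨σ, hσ, hr, rfl⟩ := hT.exists_isRootedChoice hf
    exact ⟨⟨σ, hσ, hr ▸ hp⟩, by simp only [hr]⟩

theorem card_isRootedChoice_eq_sum [Fintype V] [Finite E] (u : V) :
    Nat.card {σ // G.IsRootedChoice σ u}
      = ∑ v, Nat.card {σ // G.IsRootedChoice σ v ∧ G.head (σ v) = u} := by
  rw [← Nat.card_sigma]
  refine Nat.card_congr ((Equiv.sigmaFiberEquiv fun σ : {σ // G.IsRootedChoice σ u} =>
    (G.head ∘ σ.1)^[Function.minimalPeriod (G.head ∘ σ.1) u - 1] u).symm.trans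
      (Equiv.sigmaCongrRight fun v => ?_))
  exact (Equiv.subtypeSubtypeEquivSubtypeInter _ _).trans
    (Equiv.subtypeEquivRight fun σ => isRootedChoice_and_iterate_eq_iff)

theorem outdeg_mul_treeCount [Fintype V] [Fintype E] [DecidableEq V] (u : V) :
    G.outdeg u * G.treeCount u = ∑ v, G.edgeCount v u * G.treeCount v := by
  have hcard (p : E → Prop) [DecidablePred p] : Nat.card {e // p e} = #(univ.filter p) := by
    rw [Nat.card_eq_fintype_card, Fintype.card_subtype]
  have hleft := G.card_isRootedChoice_and u fun _ => True
  simp only [and_true] at hleft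
  rw [outdeg, ← hcard, ← hleft, card_isRootedChoice_eq_sum]
  refine sum_congr rfl fun v _ => ?_
  rw [G.card_isRootedChoice_and v fun e => G.head e = u, edgeCount, hcard]

theorem laplacian_mulVec_apply_s8 [Fintype V] [Fintype E] [DecidableEq V] (x : V → ℤ) (u : V) :
    G.laplacian.mulVec x u = G.outdeg u * x u - ∑ v, G.edgeCount v u * x v := by
  simp only [Matrix.mulVec, dotProduct, laplacian, sub_mul, sum_sub_distrib, ite_mul, zero_mul,
    sum_ite_eq, mem_univ, if_true]

end Counting

end Multigraph

theorem stmt8_general {V E : Type} [Fintype V] [Fintype E] [DecidableEq V]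
    (G : Multigraph V E) :
    G.laplacian.mulVec (fun v => (G.treeCount v : ℤ)) = 0 := by
  funext u
  rw [G.laplacian_mulVec_apply_s8, Pi.zero_apply, sub_eq_zero]
  exact_mod_cast G.outdeg_mul_treeCount u

theorem stmt8 {V E : Type} [Fintype V] [Fintype E] [DecidableEq V] [DecidableEq E]
    (G : Multigraph V E) (hsc : G.StronglyConnected) :
    G.laplacian.mulVec (fun v => (G.treeCount v : ℤ)) = 0 :=
  stmt8_general G
end

section
/- Let G be a finite strongly connected directed multigraph, π ∈ ℕ^V positive with Δπ = 0, G̃ the multigraph replacing each edge e from u to v by π_u parallel copies, and w a fixed vertex. Then the number of Eulerian tours of G̃ starting at w equals the number of π-Eulerian tours of G starting at w multiplied by Π_{v∈V} (π_v!)^{d_v}. -/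
open Finset

/-!
An Eulerian tour of `G̃` projects to a π-Eulerian tour of `G`, and it is recovered from that
projection together with, for each edge `e` of `G`, the order in which the tour traverses the
`π (tail e)` parallel copies of `e`. Every such order occurs, so each π-Eulerian tour has
`∏ₑ π (tail e)! = ∏ᵥ (π v!) ^ d_v` lifts.
-/

namespace List

variable {α : Type*} {β : α → Type*} [DecidableEq α]

def sigmaFiber (a : α) : List (Σ a, β a) → List (β a)
  | [] => []
  | ⟨b, x⟩ :: l => if h : b = a then (h ▸ x) :: sigmaFiber a l else sigmaFiber a l

/-- Inverse to `l ↦ (l.map Sigma.fst, (sigmaFiber · l))` on the pairs `(L, σ)` with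
`(σ a).length = L.count a`; the branch `σ a = []` is never taken there. -/
def sigmaMerge : List α → (∀ a, List (β a)) → List (Σ a, β a)
  | [], _ => []
  | a :: L, σ =>
    match σ a with
    | [] => sigmaMerge L σ
    | x :: r => ⟨a, x⟩ :: sigmaMerge L (Function.update σ a r)

@[simp]
theorem sigmaFiber_cons_self (a : α) (x : β a) (l : List (Σ a, β a)) :
    sigmaFiber a (⟨a, x⟩ :: l) = x :: sigmaFiber a l := by
  rw [sigmaFiber, dif_pos rfl]

theorem sigmaFiber_cons_of_ne {a b : α} (h : b ≠ a) (x : β b) (l : List (Σ a, β a)) :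
    sigmaFiber a (⟨b, x⟩ :: l) = sigmaFiber a l := by
  rw [sigmaFiber, dif_neg h]

theorem sigmaMerge_cons_of_eq {a : α} {L : List α} {σ : ∀ a, List (β a)} {x : β a}
    {r : List (β a)} (h : σ a = x :: r) :
    sigmaMerge (a :: L) σ = ⟨a, x⟩ :: sigmaMerge L (Function.update σ a r) := by
  simp only [sigmaMerge, h]

theorem count_sigmaFiber [∀ a, DecidableEq (β a)] (a : α) (x : β a) :
    ∀ l : List (Σ a, β a), (sigmaFiber a l).count x = l.count ⟨a, x⟩
  | [] => rfl
  | ⟨b, y⟩ :: l => by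
    by_cases h : b = a
    · subst h
      simp [count_cons, count_sigmaFiber _ x l, Sigma.ext_iff]
    · simp [sigmaFiber_cons_of_ne h, count_sigmaFiber _ x l, h]

theorem length_sigmaFiber (a : α) :
    ∀ l : List (Σ a, β a), (sigmaFiber a l).length = (l.map Sigma.fst).count a
  | [] => rfl
  | ⟨b, x⟩ :: l => by
    by_cases h : b = a
    · subst h
      simp [length_sigmaFiber _ l]
    · simp [sigmaFiber_cons_of_ne h, length_sigmaFiber _ l, h]

theorem sigmaMerge_map_fst_sigmaFiber :
    ∀ l : List (Σ a, β a), sigmaMerge (l.map Sigma.fst) (sigmaFiber · l) = l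
  | [] => rfl
  | ⟨b, x⟩ :: l => by
    have hfib : Function.update (sigmaFiber · (⟨b, x⟩ :: l)) b (sigmaFiber b l) =
        (sigmaFiber · l) := by
      funext a
      by_cases h : a = b
      · subst h
        rw [Function.update_self]
      · rw [Function.update_of_ne h, sigmaFiber_cons_of_ne (Ne.symm h)]
    rw [map_cons, sigmaMerge_cons_of_eq (a := b) (σ := (sigmaFiber · (⟨b, x⟩ :: l)))
      (sigmaFiber_cons_self b x l), hfib, sigmaMerge_map_fst_sigmaFiber l]

theorem length_update_tail {b : α} {L : List α} {σ : ∀ a, List (β a)} {x : β b}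
    {r : List (β b)} (hσ : ∀ a, (σ a).length = (b :: L).count a) (hb : σ b = x :: r)
    (a : α) :
    (Function.update σ b r a).length = L.count a := by
  have := hσ a
  by_cases h : a = b
  · subst h
    simp_all [count_cons]
  · simp_all [count_cons, Ne.symm h]

theorem exists_cons_of_length_eq_count {b : α} {L : List α} {σ : ∀ a, List (β a)}
    (hσ : ∀ a, (σ a).length = (b :: L).count a) : ∃ x r, σ b = x :: r := by
  have := hσ b
  rw [count_cons_self] at this
  exact exists_cons_of_length_eq_add_one this

theorem map_fst_sigmaMerge :
    ∀ (L : List α) (σ : ∀ a, List (β a)), (∀ a, (σ a).length = L.count a) →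
      (sigmaMerge L σ).map Sigma.fst = L
  | [], _, _ => rfl
  | b :: L, σ, hσ => by
    obtain ⟨x, r, hb⟩ := exists_cons_of_length_eq_count hσ
    rw [sigmaMerge_cons_of_eq hb, map_cons,
      map_fst_sigmaMerge L _ (length_update_tail hσ hb)]

theorem sigmaFiber_sigmaMerge (a : α) :
    ∀ (L : List α) (σ : ∀ a, List (β a)), (∀ a, (σ a).length = L.count a) →
      sigmaFiber a (sigmaMerge L σ) = σ a
  | [], σ, hσ => (length_eq_zero_iff.1 (hσ a)).symm
  | b :: L, σ, hσ => by
    obtain ⟨x, r, hb⟩ := exists_cons_of_length_eq_count hσ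
    rw [sigmaMerge_cons_of_eq hb]
    by_cases h : b = a
    · subst h
      rw [sigmaFiber_cons_self, sigmaFiber_sigmaMerge b L _ (length_update_tail hσ hb),
        Function.update_self, hb]
    · rw [sigmaFiber_cons_of_ne h, sigmaFiber_sigmaMerge a L _ (length_update_tail hσ hb),
        Function.update_of_ne (Ne.symm h)]

end List

section Arrangements

variable {α : Type*} [Fintype α] [DecidableEq α]

theorem List.count_eq_one_iff_perm_toList {u : List α} :
    (∀ a, u.count a = 1) ↔ u.Perm Finset.univ.toList := by
  have hone : ∀ a, (Finset.univ : Finset α).toList.count a = 1 := fun a =>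
    List.count_eq_one_of_mem (Finset.nodup_toList _) (Finset.mem_toList.2 (Finset.mem_univ a))
  simp only [List.perm_iff_count, hone]

theorem List.length_eq_card_of_count_eq_one {u : List α} (h : ∀ a, u.count a = 1) :
    u.length = Fintype.card α := by
  rw [(List.count_eq_one_iff_perm_toList.1 h).length_eq, Finset.length_toList, Finset.card_univ]

theorem card_lists_count_eq_one :
    Nat.card {u : List α // ∀ a, u.count a = 1} = (Fintype.card α).factorial := by
  have hnd : (Finset.univ : Finset α).toList.permutations.Nodup :=
    List.nodup_permutations _ (Finset.nodup_toList _)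
  have hperm (u : List α) :
      (∀ a, u.count a = 1) ↔ u ∈ (Finset.univ : Finset α).toList.permutations :=
    List.count_eq_one_iff_perm_toList.trans List.mem_permutations.symm
  rw [Nat.card_congr (Equiv.subtypeEquivRight hperm), Nat.card_congr (hnd.getEquiv _).symm,
    Nat.card_eq_fintype_card, Fintype.card_fin, List.length_permutations, Finset.length_toList,
    Finset.card_univ]

end Arrangements

def sigmaArrangementEquiv {α : Type*} {β : α → Type*} [DecidableEq α] [∀ a, Fintype (β a)]
    [∀ a, DecidableEq (β a)] (P : List α → Prop) :
    {l : List (Σ a, β a) // P (l.map Sigma.fst) ∧ ∀ x, l.count x = 1} ≃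
      {L : List α // P L ∧ ∀ a, L.count a = Fintype.card (β a)} ×
        (∀ a, {u : List (β a) // ∀ x, u.count x = 1}) where
  toFun l :=
    have hfib (a : α) (x : β a) : (l.1.sigmaFiber a).count x = 1 := by
      rw [List.count_sigmaFiber]; exact l.2.2 ⟨a, x⟩
    (⟨l.1.map Sigma.fst, l.2.1, fun a => by
        rw [← List.length_sigmaFiber, List.length_eq_card_of_count_eq_one (hfib a)]⟩,
      fun a => ⟨l.1.sigmaFiber a, hfib a⟩)
  invFun p :=
    have hlen (a : α) : (p.2 a).1.length = p.1.1.count a := by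
      rw [p.1.2.2 a, List.length_eq_card_of_count_eq_one (p.2 a).2]
    ⟨List.sigmaMerge p.1.1 (fun a => (p.2 a).1), by
      rw [List.map_fst_sigmaMerge _ _ hlen]
      refine ⟨p.1.2.1, fun ⟨a, x⟩ => ?_⟩
      rw [← List.count_sigmaFiber, List.sigmaFiber_sigmaMerge a _ _ hlen]
      exact (p.2 a).2 x⟩
  left_inv l := Subtype.ext (List.sigmaMerge_map_fst_sigmaFiber l.1)
  right_inv p := by
    have hlen (a : α) : (p.2 a).1.length = p.1.1.count a := by
      rw [p.1.2.2 a, List.length_eq_card_of_count_eq_one (p.2 a).2]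
    refine Prod.ext (Subtype.ext (List.map_fst_sigmaMerge _ _ hlen)) ?_
    funext a
    exact Subtype.ext (List.sigmaFiber_sigmaMerge a _ _ hlen)

theorem card_sigma_arrangements {α : Type*} {β : α → Type*} [Fintype α] [DecidableEq α]
    [∀ a, Fintype (β a)] [∀ a, DecidableEq (β a)] (P : List α → Prop) :
    Nat.card {l : List (Σ a, β a) // P (l.map Sigma.fst) ∧ ∀ x, l.count x = 1} =
      Nat.card {L : List α // P L ∧ ∀ a, L.count a = Fintype.card (β a)} *
        ∏ a, (Fintype.card (β a)).factorial := by
  rw [Nat.card_congr (sigmaArrangementEquiv P), Nat.card_prod, Nat.card_pi]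
  simp only [card_lists_count_eq_one]

namespace Multigraph

variable {V E E' : Type}

def comap (G : Multigraph V E) (f : E' → E) : Multigraph V E' :=
  ⟨G.tail ∘ f, G.head ∘ f⟩

theorem isWalk_comap (G : Multigraph V E) (f : E' → E) :
    ∀ l : List E', (G.comap f).IsWalk l ↔ G.IsWalk (l.map f)
  | [] => Iff.rfl
  | [_] => Iff.rfl
  | _ :: e :: l => and_congr Iff.rfl (isWalk_comap G f (e :: l))

theorem isClosedWalk_comap (G : Multigraph V E) (f : E' → E) (l : List E') :
    (G.comap f).IsClosedWalk l ↔ G.IsClosedWalk (l.map f) := by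
  simp only [IsClosedWalk, isWalk_comap, ne_eq, List.map_eq_nil_iff, List.head?_map,
    List.getLast?_map, Option.map_map]
  rfl

theorem startsAt_comap (G : Multigraph V E) (f : E' → E) (l : List E') (v : V) :
    (G.comap f).StartsAt l v ↔ G.StartsAt (l.map f) v := by
  simp only [StartsAt, List.head?_map, Option.map_map]
  rfl

theorem prod_comp_tail [Fintype V] [Fintype E] [DecidableEq V] (G : Multigraph V E)
    (g : V → ℕ) : ∏ e, g (G.tail e) = ∏ v, g v ^ G.outdeg v := by
  rw [← Finset.prod_fiberwise' Finset.univ G.tail g]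
  exact Finset.prod_congr rfl fun v _ => by rw [Finset.prod_const, outdeg]

end Multigraph

theorem stmt15_general {V E : Type} [Fintype V] [Fintype E] [DecidableEq V] [DecidableEq E]
    (G : Multigraph V E) (π : V → ℕ) (w : V) :
    letI Gt : Multigraph V (Σ e : E, Fin (π (G.tail e))) :=
      ⟨fun p => G.tail p.1, fun p => G.head p.1⟩
    Nat.card {l : List (Σ e : E, Fin (π (G.tail e))) //
        Gt.IsEulerian l ∧ Gt.StartsAt l w} =
      Nat.card {l : List E // G.IsPiEulerian π l ∧ G.StartsAt l w} *
        ∏ v : V, (π v).factorial ^ G.outdeg v := by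
  let Gt := G.comap (Sigma.fst : (Σ e : E, Fin (π (G.tail e))) → E)
  have hlift (l : List (Σ e : E, Fin (π (G.tail e)))) :
      Gt.IsEulerian l ∧ Gt.StartsAt l w ↔
        (G.IsClosedWalk (l.map Sigma.fst) ∧ G.StartsAt (l.map Sigma.fst) w) ∧
          ∀ x, l.count x = 1 := by
    rw [Multigraph.IsEulerian, Multigraph.isClosedWalk_comap, Multigraph.startsAt_comap]
    tauto
  have htour (L : List E) :
      G.IsPiEulerian π L ∧ G.StartsAt L w ↔
        (G.IsClosedWalk L ∧ G.StartsAt L w) ∧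
          ∀ e, L.count e = Fintype.card (Fin (π (G.tail e))) := by
    simp only [Multigraph.IsPiEulerian, Fintype.card_fin]
    tauto
  change Nat.card {l // Gt.IsEulerian l ∧ Gt.StartsAt l w} = _
  rw [Nat.card_congr (Equiv.subtypeEquivRight hlift),
    card_sigma_arrangements (β := fun e : E => Fin (π (G.tail e)))
      (fun L => G.IsClosedWalk L ∧ G.StartsAt L w),
    Nat.card_congr (Equiv.subtypeEquivRight htour),
    ← G.prod_comp_tail fun v => (π v).factorial]
  simp only [Fintype.card_fin]

theorem stmt15 {V E : Type} [Fintype V] [Fintype E] [DecidableEq V] [DecidableEq E]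
    (G : Multigraph V E) (hsc : G.StronglyConnected)
    (π : V → ℕ) (hπ : ∀ v, 0 < π v)
    (hker : G.laplacian.mulVec (fun v => (π v : ℤ)) = 0) (w : V) :
    letI Gt : Multigraph V (Σ e : E, Fin (π (G.tail e))) :=
      ⟨fun p => G.tail p.1, fun p => G.head p.1⟩
    Nat.card {l : List (Σ e : E, Fin (π (G.tail e))) //
        Gt.IsEulerian l ∧ Gt.StartsAt l w} =
      Nat.card {l : List E // G.IsPiEulerian π l ∧ G.StartsAt l w} *
        ∏ v : V, (π v).factorial ^ G.outdeg v :=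
  stmt15_general G π w
end

section
/- Let G be a finite strongly connected directed multigraph with a π-Eulerian tour for some positive π with Δπ = 0. For a fixed vertex w with outdegree d_w, the number of π-Eulerian tours starting with a fixed edge e whose tail is w does not depend on the choice of such e, and equals (1/d_w) times the number of π-Eulerian tours starting at vertex w. -/
open Finset

namespace Multigraph

variable {V E : Type} [Fintype V] [Fintype E] [DecidableEq V] [DecidableEq E]
set_option linter.unusedSectionVars false

variable {G : Multigraph V E}

lemma isWalk_cons' {e : E} {l : List E} :
    G.IsWalk (e :: l) ↔ (∀ f ∈ l.head?, G.head e = G.tail f) ∧ G.IsWalk l := by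
  cases l <;> simp [IsWalk]

lemma isWalk_concat {l : List E} {a : E}
    (h : G.IsWalk l) (h2 : ∀ f ∈ l.getLast?, G.head f = G.tail a) :
    G.IsWalk (l ++ [a]) := by
  induction l with
  | nil => simp [IsWalk]
  | cons e t ih =>
    rw [isWalk_cons'] at h
    rw [List.cons_append, isWalk_cons']
    cases t with
    | nil =>
      refine ⟨fun g hg => ?_, by simp [IsWalk]⟩
      simp only [List.nil_append, List.head?_cons, Option.mem_def, Option.some.injEq] at hg
      subst hg
      exact h2 e (by simp)
    | cons b t' =>
      refine ⟨fun g hg => ?_, ih h.2 (fun g hg => h2 g (by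
        rw [List.getLast?_cons_cons]; exact hg))⟩
      simp only [List.cons_append, List.head?_cons, Option.mem_def, Option.some.injEq] at hg
      subst hg
      exact h.1 b (by simp)

lemma IsClosedWalk.rotate_one {l : List E} (h : G.IsClosedWalk l) :
    G.IsClosedWalk (l.rotate 1) := by
  obtain ⟨hne, hwalk, hclose⟩ := h
  obtain ⟨e, t, rfl⟩ := List.exists_cons_of_ne_nil hne
  rw [List.rotate_cons_succ, List.rotate_zero]
  rw [isWalk_cons'] at hwalk
  refine ⟨by simp, ?_, ?_⟩
  · refine isWalk_concat hwalk.2 (fun g hg => ?_)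
    cases t with
    | nil => simp at hg
    | cons b t' =>
      rw [List.getLast?_cons_cons] at hclose
      simp only [List.head?_cons, Option.map_some] at hclose
      rw [Option.mem_def] at hg
      rw [hg] at hclose
      simpa using hclose
  · cases t with
    | nil =>
      simpa using hclose
    | cons b t' =>
      simp only [List.cons_append, List.head?_cons, Option.map_some]
      rw [← List.cons_append, List.getLast?_concat]
      simp only [Option.map_some, Option.some.injEq]
      exact hwalk.1 b (by simp)

lemma IsClosedWalk.rotate {l : List E} (h : G.IsClosedWalk l) (n : ℕ) :
    G.IsClosedWalk (l.rotate n) := by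
  induction n with
  | zero => simpa
  | succ n ih =>
    have : l.rotate (n + 1) = (l.rotate n).rotate 1 := by rw [List.rotate_rotate]
    rw [this]
    exact ih.rotate_one

lemma IsPiEulerian.rotate {π : V → ℕ} {l : List E} (h : G.IsPiEulerian π l) (n : ℕ) :
    G.IsPiEulerian π (l.rotate n) :=
  ⟨h.1.rotate n, fun e => by rw [(List.rotate_perm l n).count_eq]; exact h.2 e⟩

lemma length_eq_sum_count (l : List E) : l.length = ∑ e : E, l.count e := by
  have h1 : ∑ e ∈ l.toFinset, l.count e = l.length := by
    have := Multiset.toFinset_sum_count_eq (l : Multiset E)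
    simpa using this
  rw [← h1]
  exact Finset.sum_subset (Finset.subset_univ _) (fun x _ hx => by
    simpa [List.count_eq_zero] using fun h => hx (List.mem_toFinset.2 h))

lemma IsPiEulerian.length_eq {π : V → ℕ} {l : List E} (h : G.IsPiEulerian π l) :
    l.length = ∑ e : E, π (G.tail e) := by
  rw [length_eq_sum_count]
  exact Finset.sum_congr rfl fun e _ => h.2 e

lemma card_fiber (l : List E) (f : E) :
    (Finset.univ.filter (fun i : Fin l.length => l.get i = f)).card = l.count f := by
  conv_rhs => rw [← List.map_get_finRange l]
  rw [List.count_eq_countP, List.countP_map]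
  have h2 : (univ : Finset (Fin l.length)).val = ↑(List.finRange l.length) := rfl
  rw [Finset.card_def, Finset.filter_val, h2]
  rw [← Multiset.countP_eq_card_filter]
  simp only [Multiset.coe_countP]
  apply List.countP_congr
  intro i _
  simp only [Function.comp_apply, beq_iff_eq, decide_eq_true_eq]

lemma finite_pe (π : V → ℕ) (P : List E → Prop) :
    Finite {l : List E // G.IsPiEulerian π l ∧ P l} := by
  have hfin : {l : List E | l.length = ∑ e : E, π (G.tail e)}.Finite :=
    List.finite_length_eq E _
  haveI := hfin.to_subtype
  exact Finite.of_injective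
    (fun x => (⟨x.1, x.2.1.length_eq⟩ : {l : List E | l.length = ∑ e : E, π (G.tail e)}))
    (fun a b hab => Subtype.ext (Subtype.mk_eq_mk.mp hab))

/-- The set of pairs (tour, index) with tour π-Eulerian starting with `e` and
the edge at the index equal to `f`. -/
def Xset (G : Multigraph V E) (π : V → ℕ) (e f : E) : Set (List E × ℕ) :=
  {p | G.IsPiEulerian π p.1 ∧ p.1.head? = some e ∧ p.1[p.2]? = some f}

def xmap (p : List E × ℕ) : List E × ℕ :=
  (p.1.rotate p.2, (p.1.length - p.2) % p.1.length)

lemma xmap_mem {π : V → ℕ} {e f : E} {p : List E × ℕ} (hp : p ∈ Xset G π e f) :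
    xmap p ∈ Xset G π f e := by
  obtain ⟨l, i⟩ := p
  obtain ⟨hpe, he, hf⟩ := hp
  obtain ⟨hi, hgf⟩ := List.getElem?_eq_some_iff.1 hf
  have hLpos : 0 < l.length := lt_of_le_of_lt (Nat.zero_le (l, i).2) hi
  simp only at hpe he hf hi hgf hLpos
  refine ⟨hpe.rotate i, ?_, ?_⟩
  all_goals simp only [xmap]
  · rw [List.head?_rotate hi]
    exact hf
  · have hjlt : (l.length - i) % l.length < (l.rotate i).length := by
      rw [List.length_rotate]; exact Nat.mod_lt _ hLpos
    rw [List.getElem?_eq_getElem hjlt]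
    have := List.get_rotate l i ⟨(l.length - i) % l.length, hjlt⟩
    simp only [List.get_eq_getElem] at this
    rw [this]
    have harith : ((l.length - i) % l.length + i) % l.length = 0 := by
      rw [Nat.mod_add_mod, Nat.sub_add_cancel hi.le, Nat.mod_self]
    have h0 : l[0]? = some e := by
      rw [← l.head?_eq_getElem?]; exact he
    obtain ⟨h0lt, h0get⟩ := List.getElem?_eq_some_iff.1 h0
    simp only [harith]
    rw [h0get]

lemma xmap_invol {π : V → ℕ} {e f : E} {p : List E × ℕ} (hp : p ∈ Xset G π e f) :
    xmap (xmap p) = p := by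
  obtain ⟨l, i⟩ := p
  obtain ⟨hpe, he, hf⟩ := hp
  obtain ⟨hi, -⟩ := List.getElem?_eq_some_iff.1 hf
  have hLpos : 0 < l.length := lt_of_le_of_lt (Nat.zero_le (l, i).2) hi
  simp only at hpe he hf hi hLpos
  have hrl : ((l.rotate i).rotate ((l.length - i) % l.length)) = l := by
    rw [List.rotate_rotate]
    have harith : (i + (l.length - i) % l.length) % l.length = 0 := by
      rw [Nat.add_mod_mod, Nat.add_sub_cancel' hi.le, Nat.mod_self]
    rw [← List.rotate_mod, harith, List.rotate_zero]
  have hidx : ((l.rotate i).length - (l.length - i) % l.length) % (l.rotate i).length = i := by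
    rw [List.length_rotate]
    rcases Nat.eq_zero_or_pos i with h0 | hpos
    · subst h0; simp [Nat.mod_self]
    · rw [Nat.mod_eq_of_lt (Nat.sub_lt hLpos hpos), Nat.sub_sub_self hi.le,
        Nat.mod_eq_of_lt hi]
  simp only [xmap]
  rw [List.length_rotate] at hidx ⊢
  exact Prod.ext hrl (by rw [← List.length_rotate l i] at hidx ⊢; rw [hidx])

end Multigraph

section Counting

variable {V E : Type} [Fintype V] [Fintype E] [DecidableEq V] [DecidableEq E]
set_option linter.unusedSectionVars false
variable {G : Multigraph V E}

namespace Multigraph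

def fiberEquiv (l : List E) (f : E) :
    {i : ℕ // l[i]? = some f} ≃ {i : Fin l.length // l.get i = f} where
  toFun x := ⟨⟨x.1, (List.getElem?_eq_some_iff.1 x.2).1⟩, (List.getElem?_eq_some_iff.1 x.2).2⟩
  invFun x := ⟨x.1.1, by
    rw [List.getElem?_eq_getElem x.1.2]
    exact congrArg some x.2⟩
  left_inv x := rfl
  right_inv x := rfl

lemma card_fiber' {π : V → ℕ} {l : List E} (h : G.IsPiEulerian π l) (f : E) :
    Nat.card {i : ℕ // l[i]? = some f} = π (G.tail f) := by
  rw [Nat.card_congr (fiberEquiv l f), Nat.card_eq_fintype_card, Fintype.card_subtype,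
    card_fiber, h.2]

def xsigma (G : Multigraph V E) (π : V → ℕ) (e f : E) :
    (Xset G π e f) ≃
      Σ l : {l : List E // G.IsPiEulerian π l ∧ l.head? = some e}, {i : ℕ // l.1[i]? = some f} where
  toFun p := ⟨⟨p.1.1, p.2.1, p.2.2.1⟩, ⟨p.1.2, p.2.2.2⟩⟩
  invFun q := ⟨(q.1.1, q.2.1), q.1.2.1, q.1.2.2, q.2.2⟩
  left_inv p := rfl
  right_inv q := rfl

lemma card_X (π : V → ℕ) (e f : E) :
    Nat.card (Xset G π e f) =
      Nat.card {l : List E // G.IsPiEulerian π l ∧ l.head? = some e} * π (G.tail f) := by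
  haveI : Finite {l : List E // G.IsPiEulerian π l ∧ l.head? = some e} :=
    finite_pe π _
  letI : Fintype {l : List E // G.IsPiEulerian π l ∧ l.head? = some e} := Fintype.ofFinite _
  haveI hF : ∀ l : {l : List E // G.IsPiEulerian π l ∧ l.head? = some e},
      Finite {i : ℕ // l.1[i]? = some f} :=
    fun l => Finite.of_equiv _ (fiberEquiv l.1 f).symm
  letI : ∀ l : {l : List E // G.IsPiEulerian π l ∧ l.head? = some e},
      Fintype {i : ℕ // l.1[i]? = some f} := fun l => Fintype.ofFinite _
  rw [Nat.card_congr (xsigma G π e f), Nat.card_eq_fintype_card, Fintype.card_sigma]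
  have hc : ∀ l : {l : List E // G.IsPiEulerian π l ∧ l.head? = some e},
      Fintype.card {i : ℕ // l.1[i]? = some f} = π (G.tail f) :=
    fun l => by rw [← Nat.card_eq_fintype_card, card_fiber' l.2.1]
  simp only [hc, Finset.sum_const, Finset.card_univ, smul_eq_mul, Nat.card_eq_fintype_card]

def xswap (G : Multigraph V E) (π : V → ℕ) (e f : E) : Xset G π e f ≃ Xset G π f e where
  toFun p := ⟨xmap p.1, xmap_mem p.2⟩
  invFun p := ⟨xmap p.1, xmap_mem p.2⟩
  left_inv p := Subtype.ext (xmap_invol p.2)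
  right_inv p := Subtype.ext (xmap_invol p.2)

lemma part1 (π : V → ℕ) (hπ : ∀ v, 0 < π v) (e f : E) (hef : G.tail e = G.tail f) :
    Nat.card {l : List E // G.IsPiEulerian π l ∧ l.head? = some e} =
      Nat.card {l : List E // G.IsPiEulerian π l ∧ l.head? = some f} := by
  have h := Nat.card_congr (xswap G π e f)
  rw [card_X, card_X, hef] at h
  exact Nat.eq_of_mul_eq_mul_right (hπ _) h

def startEquiv (G : Multigraph V E) (π : V → ℕ) (w : V) :
    {l : List E // G.IsPiEulerian π l ∧ G.StartsAt l w} ≃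
      Σ e : {e : E // G.tail e = w},
        {l : List E // G.IsPiEulerian π l ∧ l.head? = some e.1} where
  toFun p := ⟨⟨p.1.head p.2.1.1.1, by
      have h := p.2.2
      rw [StartsAt, List.head?_eq_head p.2.1.1.1] at h
      simpa using h⟩,
    ⟨p.1, p.2.1, List.head?_eq_head _⟩⟩
  invFun q := ⟨q.2.1, q.2.2.1, by
    rw [StartsAt, q.2.2.2, Option.map_some, q.1.2]⟩
  left_inv p := rfl
  right_inv q := by
    obtain ⟨⟨e, he⟩, ⟨l, h1, h2⟩⟩ := q
    have hne : l ≠ [] := h1.1.1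
    have hh : l.head hne = e := by
      rw [List.head?_eq_head hne] at h2
      exact Option.some.inj h2
    cases hh
    rfl

end Multigraph

end Counting

theorem stmt16 {V E : Type} [Fintype V] [Fintype E] [DecidableEq V] [DecidableEq E]
    (G : Multigraph V E) (hsc : G.StronglyConnected)
    (π : V → ℕ) (hπ : ∀ v, 0 < π v)
    (hker : G.laplacian.mulVec (fun v => (π v : ℤ)) = 0)
    (hex : ∃ w : List E, G.IsPiEulerian π w) (w : V) :
    (∀ e f : E, G.tail e = w → G.tail f = w →
      Nat.card {l : List E // G.IsPiEulerian π l ∧ l.head? = some e} =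
      Nat.card {l : List E // G.IsPiEulerian π l ∧ l.head? = some f}) ∧
    (∀ e : E, G.tail e = w →
      G.outdeg w * Nat.card {l : List E // G.IsPiEulerian π l ∧ l.head? = some e} =
        Nat.card {l : List E // G.IsPiEulerian π l ∧ G.StartsAt l w}) := by
  constructor
  · intro e f he hf
    exact Multigraph.part1 π hπ e f (he.trans hf.symm)
  · intro e he
    haveI : Finite {l : List E // G.IsPiEulerian π l ∧ G.StartsAt l w} :=
      Multigraph.finite_pe π _
    letI : Fintype {l : List E // G.IsPiEulerian π l ∧ G.StartsAt l w} := Fintype.ofFinite _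
    haveI : ∀ e' : {e' : E // G.tail e' = w},
        Finite {l : List E // G.IsPiEulerian π l ∧ l.head? = some e'.1} :=
      fun _ => Multigraph.finite_pe π _
    letI : ∀ e' : {e' : E // G.tail e' = w},
        Fintype {l : List E // G.IsPiEulerian π l ∧ l.head? = some e'.1} :=
      fun _ => Fintype.ofFinite _
    have hs : Nat.card {l : List E // G.IsPiEulerian π l ∧ G.StartsAt l w} =
        Nat.card (Σ e' : {e' : E // G.tail e' = w},
          {l : List E // G.IsPiEulerian π l ∧ l.head? = some e'.1}) :=
      Nat.card_congr (Multigraph.startEquiv G π w)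
    have hsig : Nat.card (Σ e' : {e' : E // G.tail e' = w},
        {l : List E // G.IsPiEulerian π l ∧ l.head? = some e'.1}) =
        ∑ e' : {e' : E // G.tail e' = w},
          Fintype.card {l : List E // G.IsPiEulerian π l ∧ l.head? = some e'.1} := by
      rw [Nat.card_eq_fintype_card, Fintype.card_sigma]
    rw [hs, hsig]
    have hterm : ∀ e' : {e' : E // G.tail e' = w},
        Fintype.card {l : List E // G.IsPiEulerian π l ∧ l.head? = some e'.1} =
          Nat.card {l : List E // G.IsPiEulerian π l ∧ l.head? = some e} := fun e' => by
      rw [← Nat.card_eq_fintype_card]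
      exact Multigraph.part1 π hπ e'.1 e (e'.2.trans he.symm)
    simp only [hterm, Finset.sum_const, Finset.card_univ, smul_eq_mul, Fintype.card_subtype]
    rfl
end
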